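/- arXiv:2101.07250 — 4 statements merged into one kernel-verified Lean document; each statement's English description precedes it below -/
import Mathlib

section
/- For the single-threshold strategy with threshold k₁ ≥ 1 under the Mallows weighting, the winning weight satisfies W(N, k₁) = θ^{N−k₁−1} · (P_{N−1})! · P_{k₁} · Σ_{i=k₁}^{N−1} 1/P_i, where P_k = 1 + θ + … + θ^{k−1}. -/
open Finset

/-- Number of inversions (Kendall tau statistic) of a permutation. -/
def inversions {N : ℕ} (π : Equiv.Perm (Fin N)) : ℕ :=
  (Finset.univ.filter (fun x : Fin N × Fin N => x.1 < x.2 ∧ π x.2 < π x.1)).card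

/-- `P_k(θ) = 1 + θ + … + θ^(k-1)`. -/
def mallowsP (θ : ℝ) (k : ℕ) : ℝ := ∑ i ∈ Finset.range k, θ ^ i

/-- `(P_k)! = P_k · P_(k-1) · … · P_1`. -/
def mallowsPFact (θ : ℝ) (k : ℕ) : ℝ := ∏ j ∈ Finset.range k, mallowsP θ (j + 1)

/-- Positions (0-indexed) selected by the multi-threshold strategy: for each
threshold `k` in the list, the next selection is at the first position `p` with
`p ≥ k` (i.e. the first `k` candidates are rejected), `p ≥ lo` (after the previous
selection), and `p` a left-to-right maximum. -/
def selList {N : ℕ} (π : Equiv.Perm (Fin N)) : List ℕ → ℕ → List (Fin N)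
  | [], _ => []
  | k :: ks, lo =>
    let s : Finset (Fin N) := Finset.univ.filter
      (fun p => max k lo ≤ (p : ℕ) ∧ ∀ q : Fin N, q < p → π q < π p)
    if h : s.Nonempty then s.min' h :: selList π ks ((s.min' h : ℕ) + 1) else []

/-- The strategy wins on `π` if the position holding the largest value is selected. -/
def winnable {N : ℕ} (π : Equiv.Perm (Fin N)) (ks : List ℕ) : Prop :=
  ∃ p ∈ selList π ks 0, ∀ q : Fin N, π q ≤ π p

instance {N : ℕ} (π : Equiv.Perm (Fin N)) (ks : List ℕ) : Decidable (winnable π ks) :=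
  inferInstanceAs (Decidable (∃ p ∈ selList π ks 0, ∀ q : Fin N, π q ≤ π p))

/-- `W(N, k₁, …, k_s) = Σ_(winnable π ∈ S_N) θ^(c(π))`. -/
def winW (θ : ℝ) (N : ℕ) (ks : List ℕ) : ℝ :=
  ∑ π : Equiv.Perm (Fin N), if winnable π ks then θ ^ inversions π else 0

/-- `T_{≤j}(m, k₁, …, k_r)`: weight of permutations of `S_m` on which the strategy
makes at most `j` selections (with `j : ℤ`, so `T_{≤-1} = 0`). -/
def Tle (θ : ℝ) (m : ℕ) (ks : List ℕ) (j : ℤ) : ℝ :=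
  ∑ π : Equiv.Perm (Fin m),
    if ((selList π ks 0).length : ℤ) ≤ j then θ ^ inversions π else 0

/-- `T_j(m, k₁, …, k_r)`: weight of permutations of `S_m` on which the strategy
makes exactly `j` selections. -/
def Texact (θ : ℝ) (m : ℕ) (ks : List ℕ) (j : ℕ) : ℝ :=
  ∑ π : Equiv.Perm (Fin m),
    if (selList π ks 0).length = j then θ ^ inversions π else 0

namespace StmtAux
variable {n : ℕ}

variable {n : ℕ}

def ins (q : Fin (n+1)) (σ : Equiv.Perm (Fin n)) : Equiv.Perm (Fin (n+1)) :=
  (finSuccEquiv' q).trans ((Equiv.optionCongr σ).trans (finSuccEquiv' (Fin.last n)).symm)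

@[simp] lemma ins_self (q : Fin (n+1)) (σ : Equiv.Perm (Fin n)) : ins q σ q = Fin.last n := by
  simp [ins, finSuccEquiv'_at, finSuccEquiv'_symm_none]

@[simp] lemma ins_succAbove (q : Fin (n+1)) (σ : Equiv.Perm (Fin n)) (j : Fin n) :
    ins q σ (q.succAbove j) = (σ j).castSucc := by
  simp [ins, finSuccEquiv'_succAbove, finSuccEquiv'_symm_some, Fin.succAbove_last]

lemma ins_symm_last (q : Fin (n+1)) (σ : Equiv.Perm (Fin n)) :
    (ins q σ).symm (Fin.last n) = q := by
  rw [Equiv.symm_apply_eq]; simp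

lemma ins_ne_last (q : Fin (n+1)) (σ : Equiv.Perm (Fin n)) {i : Fin (n+1)} (h : i ≠ q) :
    ins q σ i < Fin.last n := by
  rw [Fin.lt_last_iff_ne_last]
  intro hl
  exact h (by rw [← ins_symm_last q σ, ← hl, Equiv.symm_apply_apply])

lemma ins_bijective :
    Function.Bijective (fun x : Fin (n+1) × Equiv.Perm (Fin n) => ins x.1 x.2) := by
  rw [Fintype.bijective_iff_injective_and_card]
  constructor
  · rintro ⟨q, σ⟩ ⟨q', σ'⟩ h
    simp only at h
    have hq : q = q' := by
      have h1 : ins q' σ' q = Fin.last n := by rw [← h]; simp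
      have h2 : ins q' σ' q' = Fin.last n := by simp
      exact (ins q' σ').injective (h1.trans h2.symm)
    subst hq
    have hσ : σ = σ' := by
      ext j
      have := congrArg (fun π => π (q.succAbove j)) h
      simp only [ins_succAbove] at this
      exact Fin.castSucc_injective n this ▸ rfl
    rw [hσ]
  · simp [Fintype.card_perm, Nat.factorial_succ]

lemma inversions_ins (q : Fin (n+1)) (σ : Equiv.Perm (Fin n)) :
    inversions (ins q σ) = inversions σ + (n - q) := by
  classical
  set π := ins q σ with hπ
  set T : Finset (Fin (n+1) × Fin (n+1)) :=
    Finset.univ.filter (fun x => x.1 < x.2 ∧ π x.2 < π x.1) with hT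
  have hTc : inversions π = T.card := rfl
  rw [hTc, ← Finset.card_filter_add_card_filter_not (p := fun x : Fin (n+1) × Fin (n+1) => x.1 = q) (s := T)]
  have h1 : T.filter (fun x => x.1 = q) = {q} ×ˢ Ioi q := by
    ext ⟨a, b⟩
    simp only [hT, Finset.mem_filter, Finset.mem_univ, true_and, Finset.mem_product,
      Finset.mem_singleton, Finset.mem_Ioi]
    constructor
    · rintro ⟨⟨h1, h2⟩, rfl⟩; exact ⟨rfl, h1⟩
    · rintro ⟨h0, h1⟩
      refine ⟨⟨by rw [h0]; exact h1, ?_⟩, h0⟩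
      rw [h0, hπ, ins_self]
      exact ins_ne_last q σ (ne_of_gt h1)
  have h2 : (T.filter (fun x => ¬ x.1 = q)).card = inversions σ := by
    unfold inversions
    refine (Finset.card_bij
      (fun (x : Fin n × Fin n) _ => ((q.succAbove x.1, q.succAbove x.2) : Fin (n+1) × Fin (n+1)))
      ?_ ?_ ?_).symm
    · rintro ⟨a, b⟩ hab
      simp only [Finset.mem_filter, Finset.mem_univ, true_and] at hab
      simp only [hT, Finset.mem_filter, Finset.mem_univ, true_and]
      refine ⟨⟨Fin.strictMono_succAbove q hab.1, ?_⟩, Fin.succAbove_ne q a⟩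
      simp only [hπ, ins_succAbove]
      exact Fin.castSucc_lt_castSucc_iff.mpr hab.2
    · rintro ⟨a, b⟩ _ ⟨a', b'⟩ _ h
      simp only [Prod.mk.injEq] at h
      exact Prod.ext ((Fin.strictMono_succAbove q).injective h.1)
        ((Fin.strictMono_succAbove q).injective h.2)
    · rintro ⟨a, b⟩ hab
      simp only [hT, Finset.mem_filter, Finset.mem_univ, true_and] at hab
      obtain ⟨⟨hlt, hinv⟩, hne⟩ := hab
      have hbne : b ≠ q := by
        rintro rfl
        rw [ins_self] at hinv
        exact absurd hinv (Fin.le_last _).not_gt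
      obtain ⟨a', ha'⟩ := Fin.exists_succAbove_eq hne
      obtain ⟨b', hb'⟩ := Fin.exists_succAbove_eq hbne
      refine ⟨⟨a', b'⟩, ?_, by simp [ha', hb']⟩
      simp only [Finset.mem_filter, Finset.mem_univ, true_and]
      constructor
      · exact (Fin.strictMono_succAbove q).lt_iff_lt.mp (by rw [ha', hb']; exact hlt)
      · have := hinv
        rw [← ha', ← hb'] at this
        simp only [hπ, ins_succAbove] at this
        exact Fin.castSucc_lt_castSucc_iff.mp this
  rw [h1, h2, Finset.card_product, Finset.card_singleton, Fin.card_Ioi, one_mul]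
  omega

lemma sum_perm_succ (f : Equiv.Perm (Fin (n+1)) → ℝ) :
    ∑ π, f π = ∑ q : Fin (n+1), ∑ σ : Equiv.Perm (Fin n), f (ins q σ) := by
  rw [← Fintype.sum_bijective (fun x : Fin (n+1) × Equiv.Perm (Fin n) => ins x.1 x.2)
    ins_bijective (fun x => f (ins x.1 x.2)) f (fun _ => rfl)]
  rw [Fintype.sum_prod_type]

lemma sum_theta_seg (θ : ℝ) (n k : ℕ) (hk : k ≤ n + 1) :
    ∑ i ∈ range k, θ ^ (n - i) = θ ^ (n + 1 - k) * mallowsP θ k := by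
  rw [← Finset.sum_range_reflect, mallowsP, Finset.mul_sum]
  apply Finset.sum_congr rfl
  intro i hi
  rw [← pow_add]
  congr 1
  have := Finset.mem_range.mp hi
  omega

lemma sum_fin_ite_lt (g : ℕ → ℝ) (k : ℕ) (hk : k ≤ n+1) :
    ∑ q : Fin (n+1), (if (q:ℕ) < k then g (q:ℕ) else 0) = ∑ i ∈ range k, g i := by
  rw [Fin.sum_univ_eq_sum_range (fun i => if i < k then g i else 0), ← Finset.sum_filter]
  congr 1
  ext i
  simp only [Finset.mem_filter, Finset.mem_range]
  omega

lemma sum_fin_ite_ge (g : ℕ → ℝ) (p : ℕ) :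
    ∑ q : Fin (n+1), (if p ≤ (q:ℕ) then g (q:ℕ) else 0) = ∑ i ∈ Finset.Ico p (n+1), g i := by
  rw [Fin.sum_univ_eq_sum_range (fun i => if p ≤ i then g i else 0), ← Finset.sum_filter]
  congr 1
  ext i
  simp only [Finset.mem_filter, Finset.mem_range, Finset.mem_Ico]
  omega

lemma sum_theta_rev (θ : ℝ) : ∑ q : Fin (n+1), θ ^ (n - (q:ℕ)) = mallowsP θ (n+1) := by
  rw [Fin.sum_univ_eq_sum_range (fun i => θ ^ (n - i))]
  have := sum_theta_seg θ n (n+1) le_rfl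
  simpa using this

lemma mallowsPFact_succ (θ : ℝ) (m : ℕ) :
    mallowsPFact θ (m+1) = mallowsPFact θ m * mallowsP θ (m+1) := by
  simp [mallowsPFact, Finset.prod_range_succ]

lemma mallowsP_add (θ : ℝ) (a b : ℕ) :
    mallowsP θ (a + b) = mallowsP θ a + θ^a * mallowsP θ b := by
  unfold mallowsP
  rw [Finset.sum_range_add, Finset.mul_sum]
  congr 1
  exact Finset.sum_congr rfl fun i _ => by rw [pow_add]

lemma mallowsP_pos {θ : ℝ} (hθ : 0 < θ) {k : ℕ} (hk : 1 ≤ k) : 0 < mallowsP θ k :=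
  Finset.sum_pos (fun i _ => pow_pos hθ i) (Finset.nonempty_range_iff.mpr (by omega))

lemma sum_pow_inversions (θ : ℝ) : ∀ m, (∑ σ : Equiv.Perm (Fin m), θ ^ inversions σ) = mallowsPFact θ m := by
  intro m
  induction m with
  | zero =>
    have h : ∀ σ : Equiv.Perm (Fin 0), θ ^ inversions σ = 1 := by
      intro σ
      rw [inversions]
      simp
    rw [Finset.sum_congr rfl (fun σ _ => h σ), Finset.sum_const, Finset.card_univ,
      Fintype.card_perm]
    simp [mallowsPFact]
  | succ n ih =>
    rw [sum_perm_succ (fun π => θ ^ inversions π)]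
    have h : ∀ q : Fin (n+1), (∑ σ : Equiv.Perm (Fin n), θ ^ inversions (ins q σ))
        = θ ^ (n - (q:ℕ)) * mallowsPFact θ n := by
      intro q
      rw [← ih, Finset.mul_sum]
      exact Finset.sum_congr rfl fun σ _ => by rw [inversions_ins, pow_add, mul_comm]
    rw [Finset.sum_congr rfl (fun q _ => h q), ← Finset.sum_mul, sum_theta_rev,
      mallowsPFact_succ]
    ring

def isLR {N : ℕ} (π : Equiv.Perm (Fin N)) (p : Fin N) : Prop := ∀ r, r < p → π r < π p

instance {N : ℕ} (π : Equiv.Perm (Fin N)) (p : Fin N) : Decidable (isLR π p) :=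
  inferInstanceAs (Decidable (∀ r, r < p → π r < π p))

def noLR {N : ℕ} (σ : Equiv.Perm (Fin N)) (k p : ℕ) : Prop :=
  ∀ j : Fin N, k ≤ (j:ℕ) → (j:ℕ) < p → ¬ isLR σ j

instance {N : ℕ} (σ : Equiv.Perm (Fin N)) (k p : ℕ) : Decidable (noLR σ k p) :=
  inferInstanceAs (Decidable (∀ j : Fin N, k ≤ (j:ℕ) → (j:ℕ) < p → ¬ isLR σ j))

lemma isLR_ins_self (q : Fin (n+1)) (σ : Equiv.Perm (Fin n)) : isLR (ins q σ) q := by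
  intro r hr
  rw [ins_self]
  exact ins_ne_last q σ (ne_of_lt hr)

lemma not_isLR_ins_of_gt (q : Fin (n+1)) (σ : Equiv.Perm (Fin n)) {j : Fin (n+1)} (h : q < j) :
    ¬ isLR (ins q σ) j := by
  intro hLR
  have h2 := hLR q h
  rw [ins_self] at h2
  exact absurd h2 (Fin.le_last _).not_gt

lemma isLR_ins_iff (q : Fin (n+1)) (σ : Equiv.Perm (Fin n)) (j : Fin n) (h : (j:ℕ) < (q:ℕ)) :
    isLR (ins q σ) (Fin.castSucc j) ↔ isLR σ j := by
  have hsa : q.succAbove j = Fin.castSucc j :=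
    Fin.succAbove_of_castSucc_lt q j (by rw [Fin.lt_def, Fin.coe_castSucc]; exact h)
  constructor
  · intro hLR r hr
    have hrv : (r:ℕ) < (j:ℕ) := hr
    have hr2 : q.succAbove r = Fin.castSucc r :=
      Fin.succAbove_of_castSucc_lt q r (by rw [Fin.lt_def, Fin.coe_castSucc]; omega)
    have h1 := hLR (Fin.castSucc r) (by rwa [Fin.castSucc_lt_castSucc_iff])
    rw [← hr2, ← hsa, ins_succAbove, ins_succAbove, Fin.castSucc_lt_castSucc_iff] at h1
    exact h1
  · intro hLR r hr
    have hrq : r ≠ q := ne_of_lt (lt_trans hr (by rw [Fin.lt_def, Fin.coe_castSucc]; exact h))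
    obtain ⟨t, ht⟩ := Fin.exists_succAbove_eq hrq
    have htj : t < j := by
      rw [← ht, ← hsa] at hr
      exact (Fin.strictMono_succAbove q).lt_iff_lt.mp hr
    rw [← ht, ← hsa, ins_succAbove, ins_succAbove, Fin.castSucc_lt_castSucc_iff]
    exact hLR t htj

lemma noLR_ins_of_lt (q : Fin (n+1)) (σ : Equiv.Perm (Fin n)) (k p : ℕ) (hq : (q:ℕ) < k) :
    noLR (ins q σ) k p := by
  intro j hk hp
  exact not_isLR_ins_of_gt q σ (by rw [Fin.lt_def]; omega)

lemma not_noLR_ins (q : Fin (n+1)) (σ : Equiv.Perm (Fin n)) (k p : ℕ) (hq1 : k ≤ (q:ℕ))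
    (hq2 : (q:ℕ) < p) : ¬ noLR (ins q σ) k p :=
  fun h => h q hq1 hq2 (isLR_ins_self q σ)

lemma noLR_ins_iff (q : Fin (n+1)) (σ : Equiv.Perm (Fin n)) (k p : ℕ) (hpq : p ≤ (q:ℕ)) :
    noLR (ins q σ) k p ↔ noLR σ k p := by
  constructor
  · intro h j hk hp
    have hjq : (j:ℕ) < (q:ℕ) := lt_of_lt_of_le hp hpq
    have h2 := h (Fin.castSucc j) (by simpa) (by simpa)
    exact fun hLR => h2 ((isLR_ins_iff q σ j hjq).mpr hLR)
  · intro h j hk hp hLR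
    have hqn : (q:ℕ) ≤ n := Nat.lt_succ_iff.mp q.isLt
    have hjn : (j:ℕ) < n := by omega
    have hjq : (j:ℕ) < (q:ℕ) := by omega
    have hjc : j = Fin.castSucc (⟨(j:ℕ), hjn⟩ : Fin n) := by
      apply Fin.ext
      simp
    exact h ⟨(j:ℕ), hjn⟩ hk hp ((isLR_ins_iff q σ _ hjq).mp (hjc ▸ hLR))
noncomputable def Aval (θ : ℝ) (m p k : ℕ) : ℝ :=
  ∑ σ : Equiv.Perm (Fin m), if noLR σ k p then θ ^ inversions σ else 0

lemma Aval_base (θ : ℝ) (p k : ℕ) (hk : 1 ≤ k) (hkp : k ≤ p) :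
    Aval θ p p k = θ^(p-k) * mallowsP θ k * mallowsPFact θ (p-1) := by
  obtain ⟨n, rfl⟩ : ∃ n, p = n + 1 := ⟨p - 1, by omega⟩
  rw [Aval, sum_perm_succ (fun π => if noLR π k (n+1) then θ ^ inversions π else 0)]
  have h : ∀ q : Fin (n+1), (∑ σ : Equiv.Perm (Fin n),
      if noLR (ins q σ) k (n+1) then θ ^ inversions (ins q σ) else 0)
      = if (q:ℕ) < k then θ ^ (n - (q:ℕ)) * mallowsPFact θ n else 0 := by
    intro q
    by_cases hq : (q:ℕ) < k
    · rw [if_pos hq]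
      have h2 : ∀ σ : Equiv.Perm (Fin n),
          (if noLR (ins q σ) k (n+1) then θ ^ inversions (ins q σ) else 0)
          = θ ^ (n - (q:ℕ)) * θ ^ inversions σ := by
        intro σ
        rw [if_pos (noLR_ins_of_lt q σ k _ hq), inversions_ins, pow_add, mul_comm]
      rw [Finset.sum_congr rfl (fun σ _ => h2 σ), ← Finset.mul_sum, sum_pow_inversions]
    · rw [if_neg hq]
      apply Finset.sum_eq_zero
      intro σ _
      rw [if_neg (not_noLR_ins q σ k _ (by omega) q.isLt)]
  rw [Finset.sum_congr rfl (fun q _ => h q),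
    sum_fin_ite_lt (fun i => θ ^ (n - i) * mallowsPFact θ n) k (by omega),
    ← Finset.sum_mul, sum_theta_seg θ n k (by omega)]
  simp only [Nat.add_sub_cancel]

lemma Aval_succ (θ : ℝ) (M p k : ℕ) (hk : 1 ≤ k) (hkp : k ≤ p) (hp : p ≤ M) :
    Aval θ (M+1) p k
      = θ^(M+1-k) * mallowsP θ k * mallowsPFact θ M + mallowsP θ (M+1-p) * Aval θ M p k := by
  rw [Aval, sum_perm_succ (fun π => if noLR π k p then θ ^ inversions π else 0)]
  have h : ∀ q : Fin (M+1), (∑ σ : Equiv.Perm (Fin M),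
      if noLR (ins q σ) k p then θ ^ inversions (ins q σ) else 0)
      = (if (q:ℕ) < k then θ ^ (M - (q:ℕ)) * mallowsPFact θ M else 0)
        + (if p ≤ (q:ℕ) then θ ^ (M - (q:ℕ)) * Aval θ M p k else 0) := by
    intro q
    rcases lt_or_ge (q:ℕ) k with hq | hq
    · rw [if_pos hq, if_neg (by omega), add_zero]
      have h2 : ∀ σ : Equiv.Perm (Fin M),
          (if noLR (ins q σ) k p then θ ^ inversions (ins q σ) else 0)
          = θ ^ (M - (q:ℕ)) * θ ^ inversions σ := by
        intro σ
        rw [if_pos (noLR_ins_of_lt q σ k _ hq), inversions_ins, pow_add, mul_comm]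
      rw [Finset.sum_congr rfl (fun σ _ => h2 σ), ← Finset.mul_sum, sum_pow_inversions]
    · rcases lt_or_ge (q:ℕ) p with hq2 | hq2
      · rw [if_neg (by omega), if_neg (by omega), add_zero]
        apply Finset.sum_eq_zero
        intro σ _
        rw [if_neg (not_noLR_ins q σ k p hq hq2)]
      · rw [if_neg (by omega), if_pos hq2, zero_add, Aval, Finset.mul_sum]
        apply Finset.sum_congr rfl
        intro σ _
        rw [if_congr (noLR_ins_iff q σ k p hq2) rfl rfl]
        by_cases hσ : noLR σ k p
        · rw [if_pos hσ, if_pos hσ, inversions_ins, pow_add, mul_comm]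
        · rw [if_neg hσ, if_neg hσ, mul_zero]
  rw [Finset.sum_congr rfl (fun q _ => h q), Finset.sum_add_distrib]
  congr 1
  · rw [sum_fin_ite_lt (fun i => θ ^ (M - i) * mallowsPFact θ M) k (by omega),
      ← Finset.sum_mul, sum_theta_seg θ M k (by omega)]
  · rw [sum_fin_ite_ge (fun i => θ ^ (M - i) * Aval θ M p k) p, ← Finset.sum_mul]
    have h3 : ∑ i ∈ Finset.Ico p (M+1), θ ^ (M - i) = mallowsP θ (M+1-p) := by
      rw [Finset.sum_Ico_eq_sum_range]
      calc ∑ i ∈ range (M+1-p), θ ^ (M - (p + i))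
          = ∑ i ∈ range (M+1-p), θ ^ (M - p - i) := by
            apply Finset.sum_congr rfl; intro i hi; congr 1; omega
        _ = mallowsP θ (M+1-p) := by
            have h2 := sum_theta_seg θ (M - p) (M + 1 - p) (by omega)
            rw [show (M - p) + 1 - (M + 1 - p) = 0 from by omega] at h2
            rw [show M + 1 - p = M - p + 1 from by omega] at h2 ⊢
            rw [h2, pow_zero, one_mul]
    rw [h3, mul_comm]

lemma Aval_closed (θ : ℝ) (m p k : ℕ) (hk : 1 ≤ k) (hkp : k ≤ p) (hpm : p ≤ m) :
    Aval θ m p k * mallowsP θ p = θ^(p-k) * mallowsP θ k * mallowsPFact θ m := by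
  induction m, hpm using Nat.le_induction with
  | base =>
    rw [Aval_base θ p k hk hkp]
    have hp1 : p = (p-1) + 1 := by omega
    have h2 := mallowsPFact_succ θ (p-1)
    rw [← hp1] at h2
    rw [h2]
    ring
  | succ m hpm ih =>
    rw [Aval_succ θ m p k hk hkp hpm, add_mul, mul_assoc (mallowsP θ (m+1-p)), ih,
      mallowsPFact_succ]
    have hsplit : mallowsP θ (m+1) = mallowsP θ (m+1-p) + θ^(m+1-p) * mallowsP θ p := by
      have h4 := mallowsP_add θ (m+1-p) p
      rw [show (m+1-p) + p = m+1 from by omega] at h4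
      exact h4
    have hpow : θ^(m+1-k) = θ^(p-k) * θ^(m+1-p) := by
      rw [← pow_add]; congr 1; omega
    rw [hsplit, hpow]
    ring

lemma winnable_iff (π : Equiv.Perm (Fin (n+1))) (k : ℕ) :
    winnable π [k] ↔ k ≤ ((π.symm (Fin.last n) : Fin (n+1)) : ℕ) ∧
      ∀ j : Fin (n+1), k ≤ (j:ℕ) → j < π.symm (Fin.last n) → ¬ isLR π j := by
  classical
  set pos := π.symm (Fin.last n) with hposdef
  have hπpos : π pos = Fin.last n := π.apply_symm_apply _
  have hne : ∀ i, i ≠ pos → π i < Fin.last n := by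
    intro i hi
    rw [Fin.lt_last_iff_ne_last]
    intro h
    exact hi (by rw [hposdef, ← h, Equiv.symm_apply_apply])
  set S : Finset (Fin (n+1)) := Finset.univ.filter
      (fun p => max k 0 ≤ (p : ℕ) ∧ ∀ q : Fin (n+1), q < p → π q < π p) with hS
  have hsel : selList π [k] 0 = if h : S.Nonempty then [S.min' h] else [] := by
    rw [selList]
    split <;> rename_i h
    · rw [selList]
    · rfl
  rw [winnable, hsel]
  constructor
  · rintro ⟨p, hp, hmax⟩
    by_cases h : S.Nonempty
    · rw [dif_pos h] at hp
      simp only [List.mem_singleton] at hp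
      subst hp
      have hple : Fin.last n ≤ π (S.min' h) := by
        have h2 := hmax pos; rwa [hπpos] at h2
      have hpeq : S.min' h = pos := by
        apply π.injective
        rw [hπpos]
        exact le_antisymm (Fin.le_last _) hple
      have hmem := S.min'_mem h
      rw [hpeq, hS, Finset.mem_filter] at hmem
      refine ⟨by have := hmem.2.1; omega, ?_⟩
      intro j hk hj hLR
      have hjS : j ∈ S := by
        rw [hS, Finset.mem_filter]
        exact ⟨Finset.mem_univ _, by omega, hLR⟩
      have h3 := S.min'_le j hjS
      rw [hpeq] at h3
      exact absurd hj (not_lt.mpr h3)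
    · rw [dif_neg h] at hp
      simp at hp
  · rintro ⟨h1, h2⟩
    have hposS : pos ∈ S := by
      rw [hS, Finset.mem_filter]
      refine ⟨Finset.mem_univ _, by omega, ?_⟩
      intro r hr
      rw [hπpos]
      exact hne r (ne_of_lt hr)
    have hSne : S.Nonempty := ⟨pos, hposS⟩
    have hminS := S.min'_mem hSne
    have hmin_le : S.min' hSne ≤ pos := S.min'_le pos hposS
    have heq : S.min' hSne = pos := by
      rcases lt_or_eq_of_le hmin_le with hlt | heq
      · exfalso
        obtain ⟨-, hm1, hm2⟩ := Finset.mem_filter.mp hminS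
        exact h2 (S.min' hSne) (by omega) hlt hm2
      · exact heq
    refine ⟨pos, ?_, ?_⟩
    · rw [dif_pos hSne, heq]
      simp
    · intro q
      rw [hπpos]
      exact Fin.le_last _

end StmtAux

open StmtAux in
theorem stmt5 (θ : ℝ) (hθ : 0 < θ) (N k₁ : ℕ) (hk : 1 ≤ k₁) (hN : k₁ < N) :
    winW θ N [k₁] =
      θ ^ (N - k₁ - 1) * mallowsPFact θ (N - 1) * mallowsP θ k₁ *
        ∑ i ∈ Finset.Ico k₁ N, 1 / mallowsP θ i := by
  obtain ⟨n, rfl⟩ : ∃ n, N = n + 1 := ⟨N - 1, by omega⟩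
  have hkn : k₁ ≤ n := by omega
  rw [winW, StmtAux.sum_perm_succ (fun π => if winnable π [k₁] then θ ^ inversions π else 0)]
  have h : ∀ q : Fin (n+1), (∑ σ : Equiv.Perm (Fin n),
      if winnable (ins q σ) [k₁] then θ ^ inversions (ins q σ) else 0)
      = if k₁ ≤ (q:ℕ) then θ ^ (n - (q:ℕ)) * Aval θ n (q:ℕ) k₁ else 0 := by
    intro q
    have hwin : ∀ σ : Equiv.Perm (Fin n),
        (winnable (ins q σ) [k₁] ↔ k₁ ≤ (q:ℕ) ∧ noLR σ k₁ (q:ℕ)) := by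
      intro σ
      rw [winnable_iff, ins_symm_last]
      constructor
      · rintro ⟨ha, hb⟩
        refine ⟨ha, ?_⟩
        rw [← noLR_ins_iff q σ k₁ (q:ℕ) le_rfl]
        intro j hjk hjq
        exact hb j hjk (by rw [Fin.lt_def]; exact hjq)
      · rintro ⟨ha, hb⟩
        refine ⟨ha, ?_⟩
        have h4 := (noLR_ins_iff q σ k₁ (q:ℕ) le_rfl).mpr hb
        intro j hjk hjq
        exact h4 j hjk (by rw [Fin.lt_def] at hjq; exact hjq)
    by_cases hq : k₁ ≤ (q:ℕ)
    · rw [if_pos hq, Aval, Finset.mul_sum]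
      apply Finset.sum_congr rfl
      intro σ _
      rw [if_congr (hwin σ) rfl rfl]
      by_cases hσ : noLR σ k₁ (q:ℕ)
      · rw [if_pos ⟨hq, hσ⟩, if_pos hσ, inversions_ins, pow_add, mul_comm]
      · rw [if_neg (fun hc => hσ hc.2), if_neg hσ, mul_zero]
    · rw [if_neg hq]
      apply Finset.sum_eq_zero
      intro σ _
      rw [if_neg (fun hc => hq ((hwin σ).mp hc).1)]
  rw [Finset.sum_congr rfl (fun q _ => h q),
    StmtAux.sum_fin_ite_ge (fun i => θ ^ (n - i) * Aval θ n i k₁) k₁,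
    show n + 1 - k₁ - 1 = n - k₁ from by omega, show n + 1 - 1 = n from by omega,
    Finset.mul_sum]
  apply Finset.sum_congr rfl
  intro i hi
  rw [Finset.mem_Ico] at hi
  have hPi : mallowsP θ i ≠ 0 := ne_of_gt (mallowsP_pos hθ (by omega))
  have hcl := Aval_closed θ n i k₁ hk hi.1 (by omega)
  have hAv : Aval θ n i k₁ = θ^(i-k₁) * mallowsP θ k₁ * mallowsPFact θ n / mallowsP θ i := by
    rw [eq_div_iff hPi]; exact hcl
  have hp2 : θ^(n-i) * θ^(i-k₁) = θ^(n-k₁) := by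
    rw [← pow_add]; congr 1; omega
  rw [hAv]
  calc θ ^ (n-i) * (θ^(i-k₁) * mallowsP θ k₁ * mallowsPFact θ n / mallowsP θ i)
      = (θ^(n-i) * θ^(i-k₁)) * mallowsP θ k₁ * mallowsPFact θ n / mallowsP θ i := by ring
    _ = θ^(n-k₁) * mallowsPFact θ n * mallowsP θ k₁ * (1 / mallowsP θ i) := by rw [hp2]; ring
end

section
/- For k ≥ 1 and m ≥ 1, the weight of permutations of S_m in which the single-threshold strategy with threshold k makes no selection equals T₀(m,k) = (θ^{m−1} + θ^{m−2} + … + θ^{m−k}) · (P_{m−1})! = θ^{m−k} · P_k · (P_{m−1})!, and T₀(m,0) = 0. -/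
open Finset

/-!
Removing the largest value from a permutation `π` of `Fin (n + 1)` whose maximum sits at
position `p` leaves a permutation `σ` of `Fin n`; the maximum is inverted with exactly the
`n - p` entries to its right, so `inv π = inv σ + (n - p)`. Summing `θ ^ inv` over this
bijection gives `Σ_{σ ∈ S_n} θ ^ inv σ = (P_n)!` by induction, and since the threshold
strategy selects nothing exactly when the maximum lies among the first `k` positions, restricting to
`p < k` gives `θ ^ (m - k) * P_k * (P_{m-1})!`.
-/

open Equiv

lemma Equiv.optionCongr_removeNone {α β : Type*} (e : Option α ≃ Option β)
    (h : e none = none) : optionCongr (removeNone e) = e := by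
  ext1 x
  cases x with
  | none => simp [h]
  | some x =>
    have hx : e (some x) ≠ none :=
      fun hx => Option.some_ne_none x (e.injective (hx.trans h.symm))
    obtain ⟨y, hy⟩ := Option.ne_none_iff_exists'.1 hx
    simp [removeNone_some e ⟨y, hy⟩]

def insertMax {n : ℕ} (p : Fin (n + 1)) (σ : Perm (Fin n)) : Perm (Fin (n + 1)) :=
  (finSuccEquiv' p).trans ((optionCongr σ).trans finSuccEquivLast.symm)

@[simp] lemma insertMax_apply_self {n : ℕ} (p : Fin (n + 1)) (σ : Perm (Fin n)) :
    insertMax p σ p = Fin.last n := by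
  simp [insertMax]

@[simp] lemma insertMax_apply_succAbove {n : ℕ} (p : Fin (n + 1)) (σ : Perm (Fin n))
    (i : Fin n) :
    insertMax p σ (p.succAbove i) = (σ i).castSucc := by
  simp [insertMax]

@[simp] lemma insertMax_symm_last {n : ℕ} (p : Fin (n + 1)) (σ : Perm (Fin n)) :
    (insertMax p σ).symm (Fin.last n) = p := by
  rw [Equiv.symm_apply_eq, insertMax_apply_self]

def insertMaxEquiv (n : ℕ) : Fin (n + 1) × Perm (Fin n) ≃ Perm (Fin (n + 1)) where
  toFun x := insertMax x.1 x.2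
  invFun π := (π.symm (Fin.last n),
    removeNone ((finSuccEquiv' (π.symm (Fin.last n))).symm.trans (π.trans finSuccEquivLast)))
  left_inv := by
    rintro ⟨p, σ⟩
    simp only [insertMax_symm_last, Prod.mk.injEq, true_and]
    convert removeNone_optionCongr σ using 2
    ext1 x
    simp [insertMax]
  right_inv π := by
    change insertMax _ _ = π
    rw [insertMax, Equiv.optionCongr_removeNone _ (by simp)]
    ext x
    simp

lemma inversions_eq_sum {N : ℕ} (π : Perm (Fin N)) :
    inversions π = ∑ x, ∑ y, if x < y ∧ π y < π x then 1 else 0 := by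
  rw [inversions, card_filter, Fintype.sum_prod_type]

lemma inversions_insertMax {n : ℕ} (p : Fin (n + 1)) (σ : Perm (Fin n)) :
    inversions (insertMax p σ) = inversions σ + (n - p) := by
  rw [inversions_eq_sum, inversions_eq_sum, Fin.sum_univ_succAbove _ p, add_comm]
  congr 1
  · refine sum_congr rfl fun i _ => ?_
    rw [Fin.sum_univ_succAbove _ p]
    simp [Fin.succAbove_lt_succAbove_iff, Fin.le_last]
  · have hlt (y : Fin (n + 1)) (hy : p < y) : insertMax p σ y < Fin.last n :=
      (Fin.le_last _).lt_of_ne fun h => hy.ne' ((insertMax p σ).injective (h.trans (by simp)))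
    rw [← card_filter, insertMax_apply_self,
      filter_congr fun y _ => and_iff_left_of_imp (hlt y), filter_lt_eq_Ioi, Fin.card_Ioi,
      Nat.add_sub_cancel]

lemma exists_le_forall_lt_apply_lt_iff {n : ℕ} (π : Perm (Fin (n + 1))) (k : ℕ) :
    (∃ p : Fin (n + 1), k ≤ p ∧ ∀ q < p, π q < π p) ↔ k ≤ π.symm (Fin.last n) := by
  constructor
  · rintro ⟨p, hkp, hp⟩
    have : p ≤ π.symm (Fin.last n) := not_lt.1 fun h => (hp _ h).not_ge (by simp [Fin.le_last])
    exact hkp.trans this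
  · refine fun hk => ⟨_, hk, fun q hq => ?_⟩
    rw [Equiv.apply_symm_apply]
    exact (Fin.le_last _).lt_of_ne fun h => hq.ne (by simp [← h])

lemma selList_singleton_eq_nil_iff {n : ℕ} (π : Perm (Fin (n + 1))) (k : ℕ) :
    selList π [k] 0 = [] ↔ (π.symm (Fin.last n) : ℕ) < k := by
  rw [← not_le, ← exists_le_forall_lt_apply_lt_iff]
  simp [selList, Finset.Nonempty]

lemma sum_symm_last_mul_pow_inversions {R : Type*} [CommSemiring R] (θ : R) {n : ℕ}
    (f : Fin (n + 1) → R) :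
    ∑ π : Perm (Fin (n + 1)), f (π.symm (Fin.last n)) * θ ^ inversions π =
      (∑ p, f p * θ ^ (n - p)) * ∑ σ : Perm (Fin n), θ ^ inversions σ := by
  rw [← (insertMaxEquiv n).sum_comp, Fintype.sum_prod_type, sum_mul]
  refine sum_congr rfl fun p _ => ?_
  simp [insertMaxEquiv, inversions_insertMax, pow_add, mul_sum, mul_comm, mul_left_comm]

lemma sum_range_pow_sub_eq_pow_mul_mallowsP (θ : ℝ) {n k : ℕ} (hk : k ≤ n + 1) :
    ∑ j ∈ range k, θ ^ (n - j) = θ ^ (n + 1 - k) * mallowsP θ k := by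
  rw [mallowsP, mul_sum, ← sum_range_reflect]
  refine sum_congr rfl fun j hj => ?_
  rw [← pow_add]
  have := mem_range.1 hj
  congr 1
  omega

lemma sum_pow_inversions (θ : ℝ) (n : ℕ) :
    ∑ σ : Perm (Fin n), θ ^ inversions σ = mallowsPFact θ n := by
  induction n with
  | zero => simp [inversions, mallowsPFact]
  | succ n ih =>
    have h := sum_symm_last_mul_pow_inversions θ (n := n) fun _ => 1
    simp only [one_mul] at h
    rw [h, ih, Fin.sum_univ_eq_sum_range (fun j => θ ^ (n - j)),
      sum_range_pow_sub_eq_pow_mul_mallowsP θ le_rfl, Nat.sub_self, pow_zero, one_mul,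
      mallowsPFact, mallowsPFact, prod_range_succ, mul_comm]

lemma sum_fin_ite_lt_mul_pow_sub (θ : ℝ) {n k : ℕ} (hk : k ≤ n + 1) :
    ∑ p : Fin (n + 1), (if (p : ℕ) < k then 1 else 0) * θ ^ (n - p) =
      ∑ j ∈ range k, θ ^ (n - j) := by
  rw [Fin.sum_univ_eq_sum_range (fun j => (if j < k then 1 else 0) * θ ^ (n - j)),
    ← sum_range_add_sum_Ico _ hk]
  have hIco : ∑ j ∈ Ico k (n + 1), (if j < k then 1 else 0) * θ ^ (n - j) = 0 :=
    sum_eq_zero fun j hj => by simp [(mem_Ico.1 hj).1]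
  rw [hIco, add_zero]
  exact sum_congr rfl fun j hj => by simp [mem_range.1 hj]

theorem Tle_singleton_zero (θ : ℝ) {n k : ℕ} (hk : k ≤ n + 1) :
    Tle θ (n + 1) [k] 0 = θ ^ (n + 1 - k) * mallowsP θ k * mallowsPFact θ n := by
  have hTle : Tle θ (n + 1) [k] 0 =
      ∑ π : Perm (Fin (n + 1)),
        (if (π.symm (Fin.last n) : ℕ) < k then 1 else 0) * θ ^ inversions π := by
    refine sum_congr rfl fun π _ => ?_
    rw [ite_zero_mul, one_mul]
    exact if_congr (by rw [Nat.cast_nonpos, List.length_eq_zero_iff, selList_singleton_eq_nil_iff])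
      rfl rfl
  rw [hTle, sum_symm_last_mul_pow_inversions θ fun p => if (p : ℕ) < k then 1 else 0,
    sum_fin_ite_lt_mul_pow_sub θ hk, sum_range_pow_sub_eq_pow_mul_mallowsP θ hk,
    sum_pow_inversions]

lemma sum_Ico_pow_eq_pow_mul_mallowsP (θ : ℝ) {m k : ℕ} (hk : k ≤ m) :
    ∑ i ∈ Ico (m - k) m, θ ^ i = θ ^ (m - k) * mallowsP θ k := by
  rw [sum_Ico_eq_sum_range, Nat.sub_sub_self hk, mallowsP, mul_sum]
  simp_rw [pow_add]

theorem stmt6 (θ : ℝ) (m : ℕ) (hm : 1 ≤ m) :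
    (∀ k : ℕ, 1 ≤ k → k ≤ m →
      Tle θ m [k] 0 = (∑ i ∈ Finset.Ico (m - k) m, θ ^ i) * mallowsPFact θ (m - 1) ∧
      Tle θ m [k] 0 = θ ^ (m - k) * mallowsP θ k * mallowsPFact θ (m - 1)) ∧
    Tle θ m [0] 0 = 0 := by
  obtain ⟨n, rfl⟩ : ∃ n, m = n + 1 := ⟨m - 1, by omega⟩
  refine ⟨fun k _ hk => ?_, ?_⟩
  · rw [sum_Ico_pow_eq_pow_mul_mallowsP θ hk, Tle_singleton_zero θ hk, Nat.add_sub_cancel]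
    exact ⟨rfl, rfl⟩
  · simp [Tle_singleton_zero θ (Nat.zero_le _), mallowsP]
end

section
/- Under the uniform distribution (θ = 1), for 1 ≤ r ≤ s and m ≥ k_r + 1, the proportion of permutations of S_m using at most r−1 selections under the (k₁,…,k_r)-strategy equals (1/m)·(k_r + k_{r−1}·Σ_{i=k_r}^{m−1} 1/i + k_{r−2}·Σ_{i₁=k_r}^{m−1} (1/i₁) Σ_{i₂=k_{r−1}}^{i₁−1} (1/i₂) + … + k₁·Σ_{i₁=k_r}^{m−1}(1/i₁)Σ_{i₂=k_{r−1}}^{i₁−1}(1/i₂)⋯Σ_{i_{r−1}=k₂}^{i_{r−2}−1}(1/i_{r−1})). -/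
open Finset

/-- Nested harmonic sums: `nestedSum [b₁, …, b_j] u =
Σ_{i₁ = b₁}^{u-1} (1/i₁) Σ_{i₂ = b₂}^{i₁-1} (1/i₂) ⋯ Σ_{i_j = b_j}^{i_{j-1}-1} (1/i_j)`. -/
noncomputable def nestedSum : List ℕ → ℕ → ℝ
  | [], _ => 1
  | b :: bs, u => ∑ i ∈ Finset.Ico b u, (1 / (i : ℝ)) * nestedSum bs i

/-!
The number of selections made by the strategy depends only on the set of record (left-to-right
maximum) positions of the permutation. Extending a permutation of `Fin m` by a last value, the new
position `m` is a record for exactly one of the `m + 1` choices and the earlier records are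
unchanged. A record at position `m ≥ k_r` is one more selection, so if `S(K, m)` counts the
permutations on which not all thresholds of `K` are used,
`S(K ++ [k], m + 1) = m · S(K ++ [k], m) + S(K, m)`, while `S(K ++ [k], k) = k!`. After dividing
by `(m + 1)!` this is the recursion `F(k :: L, m + 1) = F(k :: L, m) + F(L, m) / m` satisfied by
the nested harmonic sums, and induction on the thresholds gives the formula.
-/

def selCount (R : Finset ℕ) : List ℕ → ℕ → ℕ
  | [], _ => 0
  | k :: ks, lo =>
    if h : (R.filter (max k lo ≤ ·)).Nonempty then
      selCount R ks ((R.filter (max k lo ≤ ·)).min' h + 1) + 1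
    else 0

section selCount

variable (R : Finset ℕ)

theorem selCount_eq_zero_of_forall_lt {lo : ℕ} (h : ∀ x ∈ R, x < lo) (ks : List ℕ) :
    selCount R ks lo = 0 := by
  cases ks with
  | nil => rfl
  | cons k ks =>
    have hempty : R.filter (max k lo ≤ ·) = ∅ :=
      filter_eq_empty_iff.mpr fun x hx hle => (h x hx).not_ge (le_of_max_le_right hle)
    rw [selCount, dif_neg (by rw [hempty]; exact not_nonempty_empty)]

theorem selCount_take : ∀ (ks : List ℕ) (t lo : ℕ),
    selCount R (ks.take t) lo = min t (selCount R ks lo)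
  | [], t, lo => by simp [selCount]
  | k :: ks, 0, lo => by simp [selCount]
  | k :: ks, t + 1, lo => by
    rw [List.take_succ_cons, selCount, selCount]
    split
    · rw [selCount_take ks t]
      omega
    · simp

theorem selCount_append_singleton_le {k : ℕ} (h : ∀ x ∈ R, x < k) :
    ∀ (ks : List ℕ) (lo : ℕ), selCount R (ks ++ [k]) lo ≤ ks.length
  | [], lo => by
    have hempty : R.filter (max k lo ≤ ·) = ∅ :=
      filter_eq_empty_iff.mpr fun x hx hle => (h x hx).not_ge (le_of_max_le_left hle)
    rw [List.nil_append, selCount, dif_neg (by rw [hempty]; exact not_nonempty_empty)]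
    exact Nat.zero_le _
  | k' :: ks, lo => by
    rw [List.cons_append, selCount]
    split
    · simpa using selCount_append_singleton_le h ks _
    · exact Nat.zero_le _

theorem selCount_insert {n : ℕ} (hR : ∀ x ∈ R, x < n) :
    ∀ (ks : List ℕ) (lo : ℕ), (∀ k ∈ ks, k ≤ n) → lo ≤ n →
      selCount (insert n R) ks lo = min ks.length (selCount R ks lo + 1)
  | [], lo, _, _ => by simp [selCount]
  | k :: ks, lo, hks, hlo => by
    have hk : k ≤ n := hks k List.mem_cons_self
    have hfilter : (insert n R).filter (max k lo ≤ ·) = insert n (R.filter (max k lo ≤ ·)) := by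
      rw [filter_insert, if_pos (max_le hk hlo)]
    have hks' : ∀ x ∈ ks, x ≤ n := fun x hx => hks x (List.mem_cons_of_mem _ hx)
    rw [selCount, selCount, dif_pos (by rw [hfilter]; exact insert_nonempty _ _)]
    simp only [hfilter]
    split
    · next hne =>
      have hlt : (R.filter (max k lo ≤ ·)).min' hne < n :=
        hR _ (mem_of_mem_filter _ (min'_mem _ hne))
      rw [min'_insert _ _ hne, min_eq_right hlt.le, selCount_insert hR ks (_ + 1) hks' hlt]
      simp only [List.length_cons]
      omega
    · next hne =>
      have hmin : (insert n (R.filter (max k lo ≤ ·))).min' (insert_nonempty _ _) = n := by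
        refine le_antisymm (min'_le _ _ (mem_insert_self _ _)) (le_min' _ _ _ fun y hy => ?_)
        rcases mem_insert.mp hy with rfl | hy
        exacts [le_rfl, (hne ⟨y, hy⟩).elim]
      rw [hmin, selCount_eq_zero_of_forall_lt _ _ ks]
      · simp
      · intro x hx
        rcases mem_insert.mp hx with rfl | hx
        · omega
        · exact (hR x hx).trans (Nat.lt_succ_self n)

end selCount

def records {N : ℕ} (π : Equiv.Perm (Fin N)) : Finset ℕ :=
  (univ.filter fun p : Fin N => ∀ q < p, π q < π p).map Fin.valEmbedding

theorem lt_of_mem_records {N : ℕ} {π : Equiv.Perm (Fin N)} {x : ℕ} (hx : x ∈ records π) :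
    x < N := by
  obtain ⟨p, -, rfl⟩ := mem_map.mp hx
  exact p.isLt

theorem length_selList {N : ℕ} (π : Equiv.Perm (Fin N)) :
    ∀ (ks : List ℕ) (lo : ℕ), (selList π ks lo).length = selCount (records π) ks lo
  | [], lo => rfl
  | k :: ks, lo => by
    have hfilter : (records π).filter (max k lo ≤ ·) = (univ.filter fun p : Fin N =>
        max k lo ≤ (p : ℕ) ∧ ∀ q < p, π q < π p).image Fin.val := by
      rw [records, map_eq_image, filter_image, filter_filter]
      simp only [Fin.valEmbedding_apply, and_comm]
    rw [selList, selCount]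
    simp only [hfilter]
    split
    · next hne =>
      rw [dif_pos (hne.image _), min'_image Fin.val_strictMono.monotone, List.length_cons,
        length_selList π ks]
    · next hne =>
      rw [dif_neg (by rwa [image_nonempty])]
      rfl

/-- The permutation of `Fin (n + 1)` whose last value is `v` and whose first `n` values are in
the relative order given by `σ`. -/
def insLast {n : ℕ} (v : Fin (n + 1)) (σ : Equiv.Perm (Fin n)) : Equiv.Perm (Fin (n + 1)) :=
  finSuccEquivLast.trans ((Equiv.optionCongr σ).trans (finSuccEquiv' v).symm)

section insLast

variable {n : ℕ} (v : Fin (n + 1)) (σ : Equiv.Perm (Fin n))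

@[simp]
theorem insLast_last : insLast v σ (Fin.last n) = v := by
  simp [insLast]

@[simp]
theorem insLast_castSucc (i : Fin n) : insLast v σ i.castSucc = v.succAbove (σ i) := by
  simp [insLast, finSuccEquiv'_symm_some]

theorem insLast_bijective :
    Function.Bijective fun x : Fin (n + 1) × Equiv.Perm (Fin n) => insLast x.1 x.2 := by
  rw [Fintype.bijective_iff_injective_and_card]
  refine ⟨fun ⟨v, σ⟩ ⟨w, τ⟩ h => ?_, by simp [Fintype.card_perm, Nat.factorial_succ]⟩
  have hvw : v = w := by simpa using congr($h (Fin.last n))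
  subst hvw
  have hστ : σ = τ := Equiv.ext fun i => by simpa using congr($h i.castSucc)
  rw [hστ]

theorem mem_records_insLast (x : ℕ) :
    x ∈ records (insLast v σ) ↔ x ∈ records σ ∨ x = n ∧ v = Fin.last n := by
  have hlast : (∀ i, v.succAbove (σ i) < v) ↔ v = Fin.last n := by
    rw [σ.forall_congr_right (q := fun j => v.succAbove j < v)]
    simp only [Fin.succAbove_lt_iff_castSucc_lt]
    refine ⟨fun h => ?_, fun h i => h ▸ Fin.castSucc_lt_last i⟩
    rcases Fin.eq_castSucc_or_eq_last v with ⟨w, rfl⟩ | hv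
    exacts [(lt_irrefl _ (h w)).elim, hv]
  simp [records, Fin.exists_fin_succ', Fin.forall_fin_succ', hlast, not_lt.2 (Fin.le_last _),
    and_comm, eq_comm]

theorem records_insLast_last : records (insLast (Fin.last n) σ) = insert n (records σ) := by
  ext x
  simp [mem_records_insLast, or_comm]

theorem records_insLast_castSucc (w : Fin n) :
    records (insLast w.castSucc σ) = records σ := by
  ext x
  simp [mem_records_insLast, Fin.castSucc_ne_last]

end insLast

/-- The last position is a record for exactly one of the `n + 1` extensions of `σ`, and the
extensions do not change which earlier positions are records. -/
theorem sum_records_succ {n : ℕ} (F : Finset ℕ → ℝ) :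
    ∑ π : Equiv.Perm (Fin (n + 1)), F (records π) =
      ∑ σ : Equiv.Perm (Fin n), (n * F (records σ) + F (insert n (records σ))) := by
  rw [← Fintype.sum_bijective _ insLast_bijective (fun x => F (records (insLast x.1 x.2))) _
    fun _ => rfl, Fintype.sum_prod_type_right]
  refine sum_congr rfl fun σ _ => ?_
  simp [Fin.sum_univ_castSucc, records_insLast_last, records_insLast_castSucc]

def shortCount (K : List ℕ) (m : ℕ) : ℝ :=
  ∑ π : Equiv.Perm (Fin m), if selCount (records π) K 0 < K.length then 1 else 0

theorem Tle_one_length_sub_one (K : List ℕ) (m : ℕ) :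
    Tle 1 m K (K.length - 1) = shortCount K m := by
  refine sum_congr rfl fun π _ => ?_
  rw [length_selList, one_pow]
  congr 1
  exact propext (by omega)

@[simp]
theorem shortCount_nil (m : ℕ) : shortCount [] m = 0 := by
  simp [shortCount]

theorem shortCount_append_singleton_of_le (K : List ℕ) {k m : ℕ} (hm : m ≤ k) :
    shortCount (K ++ [k]) m = m.factorial := by
  have hshort (π : Equiv.Perm (Fin m)) : selCount (records π) (K ++ [k]) 0 < (K ++ [k]).length :=
    (selCount_append_singleton_le _ (fun x hx => (lt_of_mem_records hx).trans_le hm) K 0).trans_lt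
      (by simp)
  simp only [shortCount, hshort, if_true, sum_const, card_univ, Fintype.card_perm,
    Fintype.card_fin, nsmul_eq_mul, mul_one]

/-- A new record at the last position `m` is one more selection, so it keeps `K ++ [k]`
short exactly when the permutation was already short for `K`. -/
theorem shortCount_succ {K : List ℕ} {k m : ℕ} (hK : ∀ x ∈ K, x ≤ m) (hk : k ≤ m) :
    shortCount (K ++ [k]) (m + 1) = m * shortCount (K ++ [k]) m + shortCount K m := by
  have hinsert (σ : Equiv.Perm (Fin m)) :
      selCount (insert m (records σ)) (K ++ [k]) 0 < (K ++ [k]).length ↔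
        selCount (records σ) K 0 < K.length := by
    have hKk : ∀ x ∈ K ++ [k], x ≤ m := by
      simp only [List.mem_append, List.mem_singleton]
      rintro x (hx | rfl)
      exacts [hK x hx, hk]
    have htake := selCount_take (records σ) (K ++ [k]) K.length 0
    rw [List.take_left' rfl] at htake
    rw [selCount_insert _ (fun x hx => lt_of_mem_records hx) _ 0 hKk (Nat.zero_le m), htake]
    simp only [List.length_append, List.length_singleton]
    omega
  rw [shortCount, sum_records_succ fun R =>
    if selCount R (K ++ [k]) 0 < (K ++ [k]).length then (1 : ℝ) else 0]
  simp only [hinsert, sum_add_distrib, shortCount, mul_sum]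

noncomputable def harmonicForm (L : List ℕ) (m : ℕ) : ℝ :=
  ∑ j ∈ range L.length, (L.getD j 0 : ℝ) * nestedSum (L.take j) m

@[simp]
theorem harmonicForm_nil (m : ℕ) : harmonicForm [] m = 0 := by
  simp [harmonicForm]

theorem harmonicForm_cons (k : ℕ) (L : List ℕ) (m : ℕ) :
    harmonicForm (k :: L) m = k + ∑ i ∈ Ico k m, 1 / (i : ℝ) * harmonicForm L i := by
  simp only [harmonicForm, List.length_cons, sum_range_succ', List.getD_cons_succ,
    List.take_succ_cons, nestedSum, mul_sum, List.getD_cons_zero, List.take_zero, mul_one]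
  rw [sum_comm, add_comm]
  congr 1
  exact sum_congr rfl fun i _ => sum_congr rfl fun j _ => by ring

theorem shortCount_div_factorial {K : List ℕ} (hsort : K.Pairwise (· ≤ ·))
    (hpos : ∀ x ∈ K, 1 ≤ x) {m : ℕ} (hm : ∀ x ∈ K, x ≤ m) :
    shortCount K m / m.factorial = harmonicForm K.reverse m / m := by
  induction K using List.reverseRecOn generalizing m with
  | nil => simp
  | append_singleton K k ih =>
    simp only [List.pairwise_append, List.pairwise_singleton, List.mem_singleton, forall_eq,
      true_and] at hsort
    obtain ⟨hsort, hKk⟩ := hsort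
    have hk : 1 ≤ k := hpos k (by simp)
    have hKpos : ∀ x ∈ K, 1 ≤ x := fun x hx => hpos x (by simp [hx])
    rw [List.reverse_append, List.reverse_singleton, List.singleton_append, harmonicForm_cons]
    have hkm : k ≤ m := hm k (by simp)
    clear hm
    induction m, hkm using Nat.le_induction with
    | base =>
      rw [shortCount_append_singleton_of_le K le_rfl, Ico_self, sum_empty, add_zero,
        div_self (by positivity), div_self (by positivity)]
    | succ m hkm ihm =>
      have hKm : ∀ x ∈ K, x ≤ m := fun x hx => (hKk x hx).trans hkm
      have hm0 : (m : ℝ) ≠ 0 := Nat.cast_ne_zero.mpr (by omega)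
      have hshort := ih hsort hKpos hKm
      rw [shortCount_succ hKm hkm, sum_Ico_succ_top hkm, Nat.factorial_succ, Nat.cast_mul,
        ← add_assoc, one_div_mul_eq_div, ← hshort]
      generalize ∑ i ∈ Ico k m, 1 / (i : ℝ) * harmonicForm K.reverse i = S at ihm ⊢
      rw [div_eq_div_iff (by positivity) hm0] at ihm
      field_simp
      linear_combination ihm

theorem stmt12 (K : List ℕ) (hne : K ≠ []) (hsort : K.Pairwise (· ≤ ·))
    (hpos : ∀ x ∈ K, 1 ≤ x) (m : ℕ) (hm : K.getLast hne + 1 ≤ m) :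
    Tle 1 m K ((K.length : ℤ) - 1) / (m.factorial : ℝ) =
      (1 / (m : ℝ)) *
        ∑ j ∈ Finset.range K.length,
          (K.reverse.getD j 0 : ℝ) * nestedSum (K.reverse.take j) m := by
  have hKm : ∀ x ∈ K, x ≤ m := fun x hx =>
    (hsort.rel_getLast_of_rel_getLast_getLast hx le_rfl).trans (by omega)
  rw [Tle_one_length_sub_one, shortCount_div_factorial hsort hpos hKm, one_div_mul_eq_div,
    harmonicForm, List.length_reverse]
end

section
/- In the uniform case with two thresholds, the asymptotic winning probability of the (x₂N, x₁N)-strategy equals x₂·ln(x₁/x₂) + x₂·∫_{x₁}^{1} (1/t₁) ∫_{x₁}^{t₁} (1/t₂) dt₂ dt₁ + x₁·ln(1/x₁), which simplifies to x₂·ln(x₁/x₂) + (x₂/2)·(ln(1/x₁))² + x₁·ln(1/x₁); maximizing over 0 < x₂ ≤ x₁ ≤ 1 gives x₁ = 1/e, x₂ = e^{−3/2}, and optimal probability e^{−1} + e^{−3/2}. -/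
/-!
The inner integral is `log (t₁ / x₁)`, so the double integral is `log (1 / x₁) ^ 2 / 2`.
For the maximum pass to `a = log x₁ ≤ 0`, `b = log x₂ ≤ a`, where the probability reads
`e^b (c - b) - a e^a` with `c = a + a² / 2`. Since `e^b (c - b) ≤ e^(c - 1)` with equality at
`b = c - 1`, for `a² ≤ 2` the probability is at most `e^(c - 1) - a e^a`, which is maximal at
`a = -1`, giving `x₁ = e⁻¹`, `x₂ = e^(-3/2)`. For `a² ≥ 2` the constraint `b ≤ a` binds and the
bound becomes the value `e^a (a² / 2 - a)` at `x₂ = x₁`, which increases in `a` up to `-√2`, where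
the two bounds agree.
-/

open Real intervalIntegral Set Interval

theorem integral_one_div_mul_integral_one_div {a b : ℝ} (ha : 0 < a) (hb : 0 < b) :
    ∫ t in a..b, (1 / t) * ∫ s in a..t, (1 / s) = log (b / a) ^ 2 / 2 := by
  have hpos : ∀ t ∈ [[a, b]], 0 < t := fun t ht => (lt_min ha hb).trans_le ht.1
  have hinner : EqOn (fun t => (1 / t) * ∫ s in a..t, (1 / s)) (fun t => (1 / t) * log (t / a))
      [[a, b]] := fun t ht => by simp only [integral_one_div_of_pos ha (hpos t ht)]
  have hderiv : ∀ t ∈ [[a, b]],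
      HasDerivAt (fun t => log (t / a) ^ 2 / 2) ((1 / t) * log (t / a)) t := by
    intro t ht
    have ht := (hpos t ht).ne'
    have hlog := ((hasDerivAt_id t).div_const a).log (div_ne_zero ht ha.ne')
    refine ((hlog.pow 2).div_const 2).congr_deriv ?_
    simp only [id]
    field_simp
    norm_num
  have hcont : ContinuousOn (fun t => (1 / t) * log (t / a)) [[a, b]] := by
    refine ContinuousOn.mul (continuousOn_const.div continuousOn_id fun t ht => (hpos t ht).ne') ?_
    exact (continuousOn_id.div_const a).log fun t ht => div_ne_zero (hpos t ht).ne' ha.ne'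
  rw [integral_congr hinner, integral_eq_sub_of_hasDerivAt hderiv hcont.intervalIntegrable,
    div_self ha.ne', log_one]
  ring

theorem exp_mul_sub_le_exp_sub_one (b c : ℝ) : exp b * (c - b) ≤ exp (c - 1) :=
  calc exp b * (c - b) ≤ exp b * exp (c - 1 - b) :=
        mul_le_mul_of_nonneg_left (by linarith [add_one_le_exp (c - 1 - b)]) (exp_pos b).le
    _ = exp (c - 1) := by rw [← exp_add]; ring_nf

theorem exp_mul_sub_le_exp_mul_sub {a b c : ℝ} (hba : b ≤ a) (hac : a ≤ c - 1) :
    exp b * (c - b) ≤ exp a * (c - a) :=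
  calc exp b * (c - b) ≤ exp b * ((a - b + 1) * (c - a)) := by
        gcongr
        nlinarith [mul_nonneg (sub_nonneg.2 hba) (by linarith : 0 ≤ c - a - 1)]
    _ ≤ exp b * (exp (a - b) * (c - a)) := by
        gcongr
        · linarith
        · linarith [add_one_le_exp (a - b)]
    _ = exp a * (c - a) := by rw [← mul_assoc, ← exp_add]; ring_nf

namespace TwoThreshold

/- `winProbLog a b` is the winning probability in the coordinates `a = log x₁`, `b = log x₂`;
`interiorValue a` is its maximum over all `b` (at `b = a + a ^ 2 / 2 - 1`), `diagonalValue a` its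
value at `b = a`. -/
noncomputable def winProbLog (a b : ℝ) : ℝ := exp b * (a + a ^ 2 / 2 - b) - a * exp a

noncomputable def interiorValue (a : ℝ) : ℝ := exp (a + a ^ 2 / 2 - 1) - a * exp a

noncomputable def diagonalValue (a : ℝ) : ℝ := exp a * (a ^ 2 / 2 - a)

theorem winProbLog_le_interiorValue (a b : ℝ) : winProbLog a b ≤ interiorValue a := by
  simpa [winProbLog, interiorValue] using exp_mul_sub_le_exp_sub_one b (a + a ^ 2 / 2)

theorem winProbLog_le_diagonalValue {a b : ℝ} (hba : b ≤ a) (ha : 2 ≤ a ^ 2) :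
    winProbLog a b ≤ diagonalValue a := by
  have := exp_mul_sub_le_exp_mul_sub hba (c := a + a ^ 2 / 2) (by linarith)
  simp only [winProbLog, diagonalValue]
  linarith

theorem hasDerivAt_interiorValue (a : ℝ) :
    HasDerivAt interiorValue ((1 + a) * (exp (a + a ^ 2 / 2 - 1) - exp a)) a := by
  have hexp := ((((hasDerivAt_id' a).add ((hasDerivAt_pow 2 a).div_const 2)).sub_const 1).exp)
  refine (hexp.sub ((hasDerivAt_id' a).mul (hasDerivAt_exp a))).congr_deriv ?_
  norm_num
  ring

theorem hasDerivAt_diagonalValue (a : ℝ) :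
    HasDerivAt diagonalValue (exp a * (a ^ 2 / 2 - 1)) a := by
  have hpoly := ((hasDerivAt_pow 2 a).div_const 2).sub (hasDerivAt_id' a)
  refine ((hasDerivAt_exp a).mul hpoly).congr_deriv ?_
  norm_num
  ring

theorem interiorValue_neg_one : interiorValue (-1) = exp (-1) + exp (-(3 / 2)) := by
  norm_num [interiorValue]
  ring

theorem interiorValue_le {a : ℝ} (ha₁ : -√2 ≤ a) (ha₀ : a ≤ 0) :
    interiorValue a ≤ exp (-1) + exp (-(3 / 2)) := by
  have hcont : Continuous interiorValue :=
    continuous_iff_continuousAt.2 fun t => (hasDerivAt_interiorValue t).continuousAt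
  -- On [-√2, 0] the second factor of the derivative is ≤ 0, so only the sign of `1 + t` matters.
  have hexp : ∀ t ∈ Icc (-√2) 0, exp (t + t ^ 2 / 2 - 1) - exp t ≤ 0 := by
    intro t ht
    have : t ^ 2 ≤ 2 := by nlinarith [ht.1, ht.2, sq_sqrt (zero_le_two : (0 : ℝ) ≤ 2)]
    linarith [exp_le_exp.2 (by linarith : t + t ^ 2 / 2 - 1 ≤ t)]
  have hsqrt : 1 ≤ √2 := one_le_sqrt.2 one_le_two
  rw [← interiorValue_neg_one]
  rcases le_total a (-1) with h | h
  · refine monotoneOn_of_hasDerivWithinAt_nonneg (convex_Icc (-√2) (-1)) hcont.continuousOn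
      (fun t _ => (hasDerivAt_interiorValue t).hasDerivWithinAt) (fun t ht => ?_)
      ⟨ha₁, h⟩ ⟨by linarith, le_rfl⟩ h
    rw [interior_Icc] at ht
    exact mul_nonneg_of_nonpos_of_nonpos (by linarith [ht.2])
      (hexp t ⟨ht.1.le, by linarith [ht.2]⟩)
  · refine antitoneOn_of_hasDerivWithinAt_nonpos (convex_Icc (-1) 0) hcont.continuousOn
      (fun t _ => (hasDerivAt_interiorValue t).hasDerivWithinAt) (fun t ht => ?_)
      ⟨le_rfl, by norm_num⟩ ⟨h, ha₀⟩ h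
    rw [interior_Icc] at ht
    exact mul_nonpos_of_nonneg_of_nonpos (by linarith [ht.1])
      (hexp t ⟨by linarith [ht.1], ht.2.le⟩)

theorem diagonalValue_le {a : ℝ} (ha : a ≤ -√2) :
    diagonalValue a ≤ exp (-1) + exp (-(3 / 2)) := by
  have hcont : Continuous diagonalValue :=
    continuous_iff_continuousAt.2 fun t => (hasDerivAt_diagonalValue t).continuousAt
  have hsq : √2 ^ 2 = 2 := sq_sqrt zero_le_two
  have hmono : MonotoneOn diagonalValue (Iic (-√2)) :=
    monotoneOn_of_hasDerivWithinAt_nonneg (convex_Iic _) hcont.continuousOn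
      (fun t _ => (hasDerivAt_diagonalValue t).hasDerivWithinAt) fun t ht => by
        rw [interior_Iic] at ht
        have : 2 ≤ t ^ 2 := by nlinarith [mem_Iio.1 ht, sqrt_nonneg 2]
        exact mul_nonneg (exp_pos t).le (by linarith)
  have hmeet : diagonalValue (-√2) = interiorValue (-√2) := by
    simp only [diagonalValue, interiorValue, neg_sq, hsq]
    ring_nf
  calc diagonalValue a ≤ diagonalValue (-√2) := hmono ha (mem_Iic.2 le_rfl) ha
    _ = interiorValue (-√2) := hmeet
    _ ≤ _ := interiorValue_le le_rfl (neg_nonpos.2 (sqrt_nonneg 2))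

theorem winProbLog_le {a b : ℝ} (hba : b ≤ a) (ha : a ≤ 0) :
    winProbLog a b ≤ exp (-1) + exp (-(3 / 2)) := by
  have hsq : √2 ^ 2 = 2 := sq_sqrt zero_le_two
  rcases le_total (-√2) a with h | h
  · exact (winProbLog_le_interiorValue a b).trans (interiorValue_le h ha)
  · have : 2 ≤ a ^ 2 := by nlinarith [sqrt_nonneg 2]
    exact (winProbLog_le_diagonalValue hba this).trans (diagonalValue_le h)

theorem winProbLog_log_log {x₁ x₂ : ℝ} (hx₁ : 0 < x₁) (hx₂ : 0 < x₂) :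
    winProbLog (log x₁) (log x₂) =
      x₂ * log (x₁ / x₂) + (x₂ / 2) * log (1 / x₁) ^ 2 + x₁ * log (1 / x₁) := by
  rw [winProbLog, exp_log hx₁, exp_log hx₂, log_div hx₁.ne' hx₂.ne', one_div, log_inv]
  ring

end TwoThreshold

theorem stmt15 :
    (∀ x₁ x₂ : ℝ, 0 < x₂ → x₂ ≤ x₁ → x₁ ≤ 1 →
      x₂ * Real.log (x₁ / x₂) +
          x₂ * (∫ t₁ in x₁..(1 : ℝ), (1 / t₁) * ∫ t₂ in x₁..t₁, (1 / t₂)) +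
          x₁ * Real.log (1 / x₁) =
        x₂ * Real.log (x₁ / x₂) + (x₂ / 2) * (Real.log (1 / x₁)) ^ 2 +
          x₁ * Real.log (1 / x₁)) ∧
    (∀ x₁ x₂ : ℝ, 0 < x₂ → x₂ ≤ x₁ → x₁ ≤ 1 →
      x₂ * Real.log (x₁ / x₂) + (x₂ / 2) * (Real.log (1 / x₁)) ^ 2 +
          x₁ * Real.log (1 / x₁) ≤
        Real.exp (-1) + Real.exp (-(3 / 2))) ∧
    (Real.exp (-(3 / 2)) * Real.log (Real.exp (-1) / Real.exp (-(3 / 2))) +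
        (Real.exp (-(3 / 2)) / 2) * (Real.log (1 / Real.exp (-1))) ^ 2 +
        Real.exp (-1) * Real.log (1 / Real.exp (-1)) =
      Real.exp (-1) + Real.exp (-(3 / 2))) := by
  refine ⟨fun x₁ x₂ hx₂ h₂₁ _ => ?_, fun x₁ x₂ hx₂ h₂₁ h₁ => ?_, ?_⟩
  · rw [integral_one_div_mul_integral_one_div (hx₂.trans_le h₂₁) one_pos]
    ring
  · have hx₁ := hx₂.trans_le h₂₁
    rw [← TwoThreshold.winProbLog_log_log hx₁ hx₂]
    exact TwoThreshold.winProbLog_le (log_le_log hx₂ h₂₁) (log_nonpos hx₁.le h₁)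
  · rw [← TwoThreshold.winProbLog_log_log (exp_pos _) (exp_pos _), log_exp, log_exp]
    norm_num [TwoThreshold.winProbLog]
    ring
end
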